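/- Let 0 < α < 1, X ⊆ ℂ compact, b ∈ X, and let μ be a finite complex measure on X × X with no mass at (b,b). Then there exists a constant M > 0 such that the set E = {a ∈ ℂ : |a-b| · ∫∫ |z-w|/(|z-a||w-a|) d|μ|(z,w) < M} has full area density at b. -/

import Mathlib

/-!
By the triangle inequality `|z - w| ≤ |z - a| + |w - a|`, the kernel is at most
`1/|z - a| + 1/|w - a|`, so the function in question is bounded by `|a - b| U(a)`, where
`U(a) = ∫ dν(z)/|z - a|` is the planar Riesz potential of the sum `ν` of the two marginals of `σ`.
For `|a - b| ≤ ρ/2`, every `z` that is `b` itself or lies outside `B(b, ρ)` has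
`|a - b| ≤ |z - a|`, so these points contribute at most `ν(ℂ)` in total. The punctured ball
`B(b, ρ) \ {b}` has `ν`-mass tending to `0` with `ρ`, while `∫_{B(b,r)} |a - b|/|z - a| da ≤ 3πr²`
for every `z`; by Markov's inequality the points of `B(b, r)` where the punctured ball contributes
more than `1` fill at most the fraction `3 ν(B(b, ρ) \ {b})` of `B(b, r)`. Hence `M = ν(ℂ) + 1`.
-/

open MeasureTheory Metric Filter ENNReal

/-- `E` has full area density at `b`. -/
def FullAreaDensityAt (E : Set ℂ) (b : ℂ) : Prop :=
  Tendsto (fun r : ℝ => volume (E ∩ closedBall b r) / ENNReal.ofReal (Real.pi * r ^ 2))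
    (nhdsWithin 0 (Set.Ioi 0)) (nhds 1)

/-- The potential H̃(μ)(a) = ∫∫ |z-w|^{1-α} / (|z-a||w-a|) d|μ|(z,w), where σ
plays the role of the total variation |μ|. -/
noncomputable def Htilde (α : ℝ) (σ : Measure (ℂ × ℂ)) (a : ℂ) : ℝ≥0∞ :=
  ∫⁻ p, (ENNReal.ofReal (dist p.1 p.2)) ^ (1 - α) *
    ((ENNReal.ofReal (dist p.1 a))⁻¹ * (ENNReal.ofReal (dist p.2 a))⁻¹) ∂σ

open Set Topology

lemma Complex.volume_closedBall_eq_ofReal (b : ℂ) {r : ℝ} (hr : 0 ≤ r) :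
    volume (closedBall b r) = ENNReal.ofReal (Real.pi * r ^ 2) := by
  rw [Complex.volume_closedBall, ← ENNReal.ofReal_coe_nnreal, NNReal.coe_real_pi,
    ← ENNReal.ofReal_pow hr, ← ENNReal.ofReal_mul (by positivity), mul_comm]

namespace FullAreaDensityAt

lemma of_volume_diff_le {E : Set ℂ} {b : ℂ}
    (h : ∀ ε : ℝ≥0∞, 0 < ε → ∀ᶠ r in 𝓝[>] (0 : ℝ),
      volume (closedBall b r \ E) ≤ ε * ENNReal.ofReal (Real.pi * r ^ 2)) :
    FullAreaDensityAt E b := by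
  rw [FullAreaDensityAt, ENNReal.tendsto_nhds one_ne_top]
  intro ε hε
  filter_upwards [h ε hε, self_mem_nhdsWithin] with r hr (hr0 : 0 < r)
  have hball := Complex.volume_closedBall_eq_ofReal b hr0.le
  set c := ENNReal.ofReal (Real.pi * r ^ 2)
  have hc0 : c ≠ 0 := (ENNReal.ofReal_pos.2 (by positivity)).ne'
  refine ⟨?_, ?_⟩
  · rw [ENNReal.le_div_iff_mul_le (Or.inl hc0) (Or.inl ofReal_ne_top),
      ENNReal.sub_mul (fun _ _ => ofReal_ne_top), one_mul, tsub_le_iff_right]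
    calc c = volume (closedBall b r) := hball.symm
      _ ≤ volume (E ∩ closedBall b r) + volume (closedBall b r \ E) := by
        rw [inter_comm]; exact measure_le_inter_add_sdiff _ _ _
      _ ≤ volume (E ∩ closedBall b r) + ε * c := add_le_add_right hr _
  · refine (ENNReal.div_le_of_le_mul ?_).trans le_self_add
    rw [one_mul, ← hball]
    exact measure_mono inter_subset_right

lemma mono {E F : Set ℂ} {b : ℂ} (hE : FullAreaDensityAt E b) (hEF : E ⊆ F) :
    FullAreaDensityAt F b := by
  refine tendsto_of_tendsto_of_tendsto_of_le_of_le' hE tendsto_const_nhds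
    (Eventually.of_forall fun r => ?_) ?_
  · exact ENNReal.div_le_div_right (measure_mono (inter_subset_inter_left _ hEF)) _
  · filter_upwards [self_mem_nhdsWithin] with r (hr : 0 < r)
    refine ENNReal.div_le_of_le_mul ?_
    rw [one_mul, ← Complex.volume_closedBall_eq_ofReal b hr.le]
    exact measure_mono inter_subset_right

end FullAreaDensityAt

lemma ofReal_mul_inv_ofReal_le_one {x y : ℝ} (h : x ≤ y) :
    ENNReal.ofReal x * (ENNReal.ofReal y)⁻¹ ≤ 1 :=
  ENNReal.div_le_of_le_mul (by rw [one_mul]; exact ofReal_le_ofReal h)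

lemma ofReal_dist_mul_inv_mul_inv_le {X : Type*} [PseudoMetricSpace X] (z w a : X) :
    ENNReal.ofReal (dist z w) * ((ENNReal.ofReal (dist z a))⁻¹ * (ENNReal.ofReal (dist w a))⁻¹)
      ≤ (ENNReal.ofReal (dist z a))⁻¹ + (ENNReal.ofReal (dist w a))⁻¹ := by
  set x := ENNReal.ofReal (dist z a)
  set y := ENNReal.ofReal (dist w a)
  have htri : ENNReal.ofReal (dist z w) ≤ x + y := by
    rw [← ENNReal.ofReal_add dist_nonneg dist_nonneg]
    exact ofReal_le_ofReal (dist_triangle_right z w a)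
  calc _ ≤ (x + y) * (x⁻¹ * y⁻¹) := by gcongr
    _ = x * x⁻¹ * y⁻¹ + y * y⁻¹ * x⁻¹ := by ring
    _ ≤ 1 * y⁻¹ + 1 * x⁻¹ := by gcongr <;> exact ENNReal.mul_inv_le_one _
    _ = x⁻¹ + y⁻¹ := by rw [one_mul, one_mul, add_comm]

lemma tendsto_measure_closedBall_diff_singleton {X : Type*} [MetricSpace X] [MeasurableSpace X]
    [OpensMeasurableSpace X] (ν : Measure X) [IsFiniteMeasure ν] (b : X) :
    Tendsto (fun ρ => ν (closedBall b ρ \ {b})) (𝓝[>] 0) (𝓝 0) := by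
  have hempty : ⋂ ρ > (0 : ℝ), closedBall b ρ \ {b} = ∅ := by
    refine eq_empty_iff_forall_notMem.2 fun z hz => ?_
    simp only [mem_iInter, Set.mem_sdiff, mem_closedBall, mem_singleton_iff] at hz
    have hzb : 0 < dist z b := dist_pos.2 (hz 1 one_pos).2
    linarith [(hz _ (half_pos hzb)).1]
  have := tendsto_measure_biInter_gt (μ := ν) (s := fun ρ => closedBall b ρ \ {b})
    (fun _ _ => (measurableSet_closedBall.diff isClosed_singleton.measurableSet).nullMeasurableSet)
    (fun _ _ _ hij => sdiff_subset_sdiff_left (closedBall_subset_closedBall hij))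
    ⟨1, one_pos, measure_ne_top ν _⟩
  rwa [hempty, measure_empty] at this

lemma lintegral_inv_dist_closedBall_self (z : ℂ) {r : ℝ} (hr : 0 ≤ r) :
    ∫⁻ a in closedBall z r, (ENNReal.ofReal (dist z a))⁻¹ = ENNReal.ofReal (2 * Real.pi * r) := by
  let f : ℂ → ℝ≥0∞ := (closedBall 0 r).indicator fun a => (ENNReal.ofReal ‖a‖)⁻¹
  have htranslate : ∫⁻ a in closedBall z r, (ENNReal.ofReal (dist z a))⁻¹ = ∫⁻ a, f a := by
    rw [← lintegral_indicator measurableSet_closedBall, ← lintegral_add_left_eq_self _ z]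
    congr 1 with a
    simp [f, indicator, dist_eq_norm]
  have hpolar : ∀ p ∈ polarCoord.target,
      ENNReal.ofReal p.1 • f (Complex.polarCoord.symm p) = (Iic r ×ˢ univ).indicator 1 p := by
    rintro ⟨ρ, θ⟩ ⟨hρ, -⟩
    have hρ : 0 < ρ := hρ
    have hnorm : ‖Complex.polarCoord.symm (ρ, θ)‖ = ρ := by
      rw [Complex.norm_polarCoord_symm, abs_of_pos hρ]
    dsimp only [f]
    by_cases hρr : ρ ≤ r
    · rw [indicator_of_mem (by rwa [mem_closedBall_zero_iff, hnorm]),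
        indicator_of_mem (by simpa), hnorm]
      exact ENNReal.mul_inv_cancel (by simpa using hρ) ofReal_ne_top
    · rw [indicator_of_notMem (by rwa [mem_closedBall_zero_iff, hnorm]),
        indicator_of_notMem (by simpa using hρr), smul_zero]
  have hS : MeasurableSet (Iic r ×ˢ (univ : Set ℝ)) := measurableSet_Iic.prod .univ
  rw [htranslate, ← Complex.lintegral_comp_polarCoord_symm,
    setLIntegral_congr_fun polarCoord.open_target.measurableSet hpolar,
    lintegral_indicator_one hS, Measure.restrict_apply hS, polarCoord_target, prod_inter_prod,
    Iic_inter_Ioi, univ_inter, Measure.volume_eq_prod, Measure.prod_prod, Real.volume_Ioc,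
    Real.volume_Ioo, ← ENNReal.ofReal_mul (by linarith)]
  ring_nf

lemma lintegral_inv_dist_closedBall_le (z b : ℂ) {r : ℝ} (hr : 0 < r) :
    ∫⁻ a in closedBall b r, (ENNReal.ofReal (dist z a))⁻¹ ≤ ENNReal.ofReal (3 * Real.pi * r) := by
  have hfar : ∀ a ∈ closedBall b r \ closedBall z r,
      (ENNReal.ofReal (dist z a))⁻¹ ≤ (ENNReal.ofReal r)⁻¹ := fun a ha =>
    ENNReal.inv_le_inv.2 <| ofReal_le_ofReal <|
      dist_comm a z ▸ (not_le.1 (mt mem_closedBall.2 ha.2)).le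
  calc _ ≤ (∫⁻ a in closedBall z r, (ENNReal.ofReal (dist z a))⁻¹)
        + ∫⁻ a in closedBall b r \ closedBall z r, (ENNReal.ofReal (dist z a))⁻¹ := by
        conv_lhs => rw [← inter_union_sdiff (closedBall b r) (closedBall z r)]
        exact (lintegral_union_le _ _ _).trans
          (add_le_add (lintegral_mono_set inter_subset_right) le_rfl)
    _ ≤ ENNReal.ofReal (2 * Real.pi * r) + (ENNReal.ofReal r)⁻¹ * volume (closedBall b r) := by
        refine add_le_add (lintegral_inv_dist_closedBall_self z hr.le).le ?_
        refine (setLIntegral_mono' (measurableSet_closedBall.diff measurableSet_closedBall)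
          hfar).trans ?_
        rw [setLIntegral_const]
        gcongr
        exact sdiff_subset
    _ = ENNReal.ofReal (3 * Real.pi * r) := by
        rw [Complex.volume_closedBall_eq_ofReal b hr.le, ← ENNReal.ofReal_inv_of_pos hr,
          ← ENNReal.ofReal_mul (by positivity), ← ENNReal.ofReal_add (by positivity)
          (by positivity)]
        congr 1
        field_simp
        ring

/-- The Riesz potential of order one in the plane, up to its normalising constant. -/
noncomputable def rieszPotential (ν : Measure ℂ) (a : ℂ) : ℝ≥0∞ :=
  ∫⁻ z, (ENNReal.ofReal (dist z a))⁻¹ ∂ν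

lemma measurable_rieszPotential (ν : Measure ℂ) [SFinite ν] : Measurable (rieszPotential ν) :=
  measurable_dist.ennreal_ofReal.inv.lintegral_prod_left'

lemma lintegral_dist_mul_inv_mul_inv_le_rieszPotential_map_fst_add_map_snd (σ : Measure (ℂ × ℂ))
    (a : ℂ) :
    ∫⁻ p, ENNReal.ofReal (dist p.1 p.2) *
        ((ENNReal.ofReal (dist p.1 a))⁻¹ * (ENNReal.ofReal (dist p.2 a))⁻¹) ∂σ
      ≤ rieszPotential (σ.map Prod.fst + σ.map Prod.snd) a := by
  have hg : Measurable fun z : ℂ => (ENNReal.ofReal (dist z a))⁻¹ :=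
    (measurable_id.dist measurable_const).ennreal_ofReal.inv
  have hg₁ : Measurable fun p : ℂ × ℂ => (ENNReal.ofReal (dist p.1 a))⁻¹ := hg.comp measurable_fst
  calc _ ≤ ∫⁻ p, (ENNReal.ofReal (dist p.1 a))⁻¹ + (ENNReal.ofReal (dist p.2 a))⁻¹ ∂σ :=
        lintegral_mono fun p => ofReal_dist_mul_inv_mul_inv_le p.1 p.2 a
    _ = _ := by
        rw [lintegral_add_left hg₁, rieszPotential, lintegral_add_measure,
          lintegral_map hg measurable_fst, lintegral_map hg measurable_snd]

lemma lintegral_closedBall_ofReal_dist_mul_rieszPotential_le (ν : Measure ℂ) [SFinite ν] (b : ℂ)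
    {r : ℝ} (hr : 0 < r) :
    ∫⁻ a in closedBall b r, ENNReal.ofReal (dist a b) * rieszPotential ν a
      ≤ ENNReal.ofReal (3 * Real.pi * r ^ 2) * ν univ := by
  have hswap := lintegral_lintegral_swap (μ := volume.restrict (closedBall b r)) (ν := ν)
    (f := fun a z => (ENNReal.ofReal (dist z a))⁻¹)
    (measurable_snd.dist measurable_fst).ennreal_ofReal.inv.aemeasurable
  calc _ ≤ ∫⁻ a in closedBall b r, ENNReal.ofReal r * rieszPotential ν a :=
        setLIntegral_mono' measurableSet_closedBall fun a ha => by
          gcongr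
          exact mem_closedBall.1 ha
    _ = ENNReal.ofReal r * ∫⁻ z, (∫⁻ a in closedBall b r, (ENNReal.ofReal (dist z a))⁻¹) ∂ν := by
        rw [lintegral_const_mul _ (measurable_rieszPotential ν)]
        exact congrArg _ hswap
    _ ≤ ENNReal.ofReal r * ∫⁻ _, ENNReal.ofReal (3 * Real.pi * r) ∂ν :=
        mul_le_mul' le_rfl (lintegral_mono fun z => lintegral_inv_dist_closedBall_le z b hr)
    _ = _ := by
        rw [lintegral_const, ← mul_assoc, ← ENNReal.ofReal_mul hr.le]
        ring_nf

lemma ofReal_dist_mul_rieszPotential_le_add_restrict (ν : Measure ℂ) {a b : ℂ} {ρ : ℝ}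
    (ha : 2 * dist a b ≤ ρ) :
    ENNReal.ofReal (dist a b) * rieszPotential ν a ≤ ν univ +
      ENNReal.ofReal (dist a b) * rieszPotential (ν.restrict (closedBall b ρ \ {b})) a := by
  set N := closedBall b ρ \ {b}
  set g : ℂ → ℝ≥0∞ := fun z => ENNReal.ofReal (dist a b) * (ENNReal.ofReal (dist z a))⁻¹
  have hg : ∀ z, g z ≤ 1 + N.indicator g z := by
    intro z
    by_cases hz : z ∈ N
    · rw [indicator_of_mem hz]
      exact le_add_self
    · rw [indicator_of_notMem hz, add_zero]
      refine ofReal_mul_inv_ofReal_le_one ?_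
      rcases not_and_or.1 hz with hfar | hzb
      · have := dist_triangle z a b
        rw [mem_closedBall, not_le] at hfar
        linarith
      · rw [not_not.1 hzb, dist_comm]
  simp only [rieszPotential]
  rw [← lintegral_const_mul' _ _ ofReal_ne_top, ← lintegral_const_mul' _ _ ofReal_ne_top,
    ← lintegral_indicator (measurableSet_closedBall.diff (measurableSet_singleton b))]
  calc ∫⁻ z, g z ∂ν ≤ ∫⁻ z, 1 + N.indicator g z ∂ν := lintegral_mono hg
    _ = ν univ + ∫⁻ z, N.indicator g z ∂ν := by
        rw [lintegral_add_left measurable_const, lintegral_const, one_mul]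

theorem fullAreaDensityAt_ofReal_dist_mul_rieszPotential_lt (ν : Measure ℂ) [IsFiniteMeasure ν]
    (b : ℂ) :
    FullAreaDensityAt {a | ENNReal.ofReal (dist a b) * rieszPotential ν a < ν univ + 1} b := by
  refine FullAreaDensityAt.of_volume_diff_le fun ε hε => ?_
  obtain ⟨ρ, hsmall, hρ⟩ : ∃ ρ, ν (closedBall b ρ \ {b}) < ε / 3 ∧ 0 < ρ :=
    (((tendsto_measure_closedBall_diff_singleton ν b).eventually_lt_const
      (ENNReal.div_pos hε.ne' ofNat_ne_top)).and self_mem_nhdsWithin).exists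
  set f : ℂ → ℝ≥0∞ := fun a =>
    ENNReal.ofReal (dist a b) * rieszPotential (ν.restrict (closedBall b ρ \ {b})) a
  have hf : Measurable f :=
    (measurable_id.dist measurable_const).ennreal_ofReal.mul (measurable_rieszPotential _)
  filter_upwards [Ioo_mem_nhdsGT (half_pos hρ)] with r ⟨hr, hrρ⟩
  have hbad : closedBall b r \ {a | ENNReal.ofReal (dist a b) * rieszPotential ν a < ν univ + 1}
      ⊆ {a | 1 ≤ f a} ∩ closedBall b r := by
    rintro a ⟨ha, hlt⟩
    refine ⟨ENNReal.le_of_add_le_add_left (measure_ne_top ν univ) ?_, ha⟩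
    refine (not_lt.1 hlt).trans (ofReal_dist_mul_rieszPotential_le_add_restrict ν ?_)
    linarith [mem_closedBall.1 ha]
  calc volume (closedBall b r \ _) ≤ volume.restrict (closedBall b r) {a | 1 ≤ f a} := by
        rw [Measure.restrict_apply' measurableSet_closedBall]
        exact measure_mono hbad
    _ ≤ ∫⁻ a in closedBall b r, f a := by
        simpa using mul_meas_ge_le_lintegral₀ hf.aemeasurable 1
    _ ≤ ENNReal.ofReal (3 * Real.pi * r ^ 2) * ν (closedBall b ρ \ {b}) := by
        simpa using lintegral_closedBall_ofReal_dist_mul_rieszPotential_le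
          (ν.restrict (closedBall b ρ \ {b})) b hr
    _ ≤ 3 * ENNReal.ofReal (Real.pi * r ^ 2) * (ε / 3) := by
        rw [mul_assoc, ENNReal.ofReal_mul (by norm_num), ENNReal.ofReal_ofNat]
        gcongr
    _ = ε * ENNReal.ofReal (Real.pi * r ^ 2) := by
        rw [mul_comm, ← mul_assoc, ENNReal.div_mul_cancel three_ne_zero ofNat_ne_top]

theorem Htilde_refined_full_density_general (b : ℂ) (σ : Measure (ℂ × ℂ)) [IsFiniteMeasure σ] :
    ∃ M : ℝ, 0 < M ∧ FullAreaDensityAt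
      {a : ℂ | ENNReal.ofReal (dist a b) *
        ∫⁻ p, ENNReal.ofReal (dist p.1 p.2) *
          ((ENNReal.ofReal (dist p.1 a))⁻¹ * (ENNReal.ofReal (dist p.2 a))⁻¹) ∂σ <
        ENNReal.ofReal M} b := by
  set ν := σ.map Prod.fst + σ.map Prod.snd
  refine ⟨(ν univ).toReal + 1, by positivity, ?_⟩
  refine (fullAreaDensityAt_ofReal_dist_mul_rieszPotential_lt ν b).mono fun a ha => ?_
  rw [ENNReal.ofReal_add ENNReal.toReal_nonneg zero_le_one,
    ofReal_toReal (measure_ne_top ν univ), ofReal_one]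
  exact (mul_le_mul' le_rfl
    (lintegral_dist_mul_inv_mul_inv_le_rieszPotential_map_fst_add_map_snd σ a)).trans_lt ha

/-- if σ = |μ| is a finite measure on X × X with no mass at (b,b),
then there exists M > 0 such that the set
{a : |a-b| ∫∫ |z-w|/(|z-a||w-a|) d|μ|(z,w) < M} has full area density at b. -/
theorem Htilde_refined_full_density (α : ℝ) (hα0 : 0 < α) (hα1 : α < 1)
    (X : Set ℂ) (hX : IsCompact X) (b : ℂ) (hb : b ∈ X)
    (σ : Measure (ℂ × ℂ)) [IsFiniteMeasure σ] (hsupp : σ ((X ×ˢ X)ᶜ) = 0)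
    (hbb : σ {((b : ℂ), (b : ℂ))} = 0) :
    ∃ M : ℝ, 0 < M ∧ FullAreaDensityAt
      {a : ℂ | ENNReal.ofReal (dist a b) *
        ∫⁻ p, ENNReal.ofReal (dist p.1 p.2) *
          ((ENNReal.ofReal (dist p.1 a))⁻¹ * (ENNReal.ofReal (dist p.2 a))⁻¹) ∂σ <
        ENNReal.ofReal M} b :=
  Htilde_refined_full_density_general b σ
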